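/- For every natural number n ≥ 3, the equitable chromatic number of the double wheel graph DW_n equals n+1; that is, DW_n admits an equitable proper coloring using exactly n+1 colors, and it admits no equitable proper coloring using fewer colors. -/

import Mathlib

open Finset

/-- The size of the color class of color `i` under the coloring `c`. -/
def classSize {V : Type*} [Fintype V] {k : ℕ} (c : V → Fin k) (i : Fin k) : ℕ :=
  (Finset.univ.filter (fun v => c v = i)).card

/-- The equitable coloring mean `μ = (∑ i·θ_i)/N` (colors indexed `1,…,k`). -/
def eqMean {V : Type*} [Fintype V] {k : ℕ} (c : V → Fin k) : ℚ :=
  (∑ i : Fin k, (((i : ℕ) : ℚ) + 1) * (classSize c i : ℚ)) / (Fintype.card V : ℚ)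

/-- The equitable coloring variance `σ² = (∑ i²·θ_i)/N − μ²`. -/
def eqVar {V : Type*} [Fintype V] {k : ℕ} (c : V → Fin k) : ℚ :=
  (∑ i : Fin k, (((i : ℕ) : ℚ) + 1) ^ 2 * (classSize c i : ℚ)) / (Fintype.card V : ℚ)
    - (eqMean c) ^ 2

/-- The double wheel graph `DW_n`: `none` is the central vertex, `some (Sum.inl i)` the
vertices of the first cycle, `some (Sum.inr i)` the vertices of the second cycle. -/
def doubleWheelGraph (n : ℕ) : SimpleGraph (Option (Fin n ⊕ Fin n)) :=
  SimpleGraph.fromRel (fun a b =>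
    match a, b with
    | none, some _ => True
    | some (Sum.inl i), some (Sum.inl j) => j.val = (i.val + 1) % n
    | some (Sum.inr i), some (Sum.inr j) => j.val = (i.val + 1) % n
    | _, _ => False)

/-!
The centre of `DW_n` is adjacent to every other vertex, so in a proper colouring it is alone in
its colour class; equitability then allows at most two vertices per class, so `2n + 1` vertices
need at least `n + 1` colours. Conversely, giving the `i`-th vertex of both cycles colour `i` and
the centre a colour of its own is proper, with classes of sizes two and one.
-/

section Equitable

variable {V : Type*} [Fintype V] {m : ℕ} (c : V → Fin m)

lemma sum_classSize : ∑ i, classSize c i = Fintype.card V :=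
  (card_eq_sum_card_fiberwise fun v _ => mem_univ (c v)).symm

lemma one_le_classSize_of_surjective (hc : Function.Surjective c) (i : Fin m) :
    1 ≤ classSize c i := by
  obtain ⟨v, rfl⟩ := hc i
  exact card_pos.mpr ⟨v, by simp⟩

lemma classSize_le_add_one_of_le_two (hc : Function.Surjective c)
    (h2 : ∀ i, classSize c i ≤ 2) (i j : Fin m) : classSize c i ≤ classSize c j + 1 := by
  have := h2 i
  have := one_le_classSize_of_surjective c hc j
  omega

variable {G : SimpleGraph V} {c}

lemma classSize_apply_eq_one (hc : ∀ u v, G.Adj u v → c u ≠ c v) {v₀ : V}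
    (hv₀ : ∀ v, v ≠ v₀ → G.Adj v₀ v) : classSize c (c v₀) = 1 := by
  refine card_eq_one.mpr ⟨v₀, eq_singleton_iff_unique_mem.mpr ⟨by simp, fun v hv => ?_⟩⟩
  by_contra hne
  exact hc v₀ v (hv₀ v hne) (mem_filter.mp hv).2.symm

lemma card_le_two_mul_of_equitable (hc : ∀ u v, G.Adj u v → c u ≠ c v)
    (heq : ∀ i j, classSize c i ≤ classSize c j + 1) {v₀ : V}
    (hv₀ : ∀ v, v ≠ v₀ → G.Adj v₀ v) : Fintype.card V ≤ 2 * m := by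
  have hle : ∀ i, classSize c i ≤ 2 := fun i => by
    have := heq i (c v₀)
    rwa [classSize_apply_eq_one hc hv₀] at this
  calc Fintype.card V = ∑ i, classSize c i := (sum_classSize c).symm
    _ ≤ ∑ _i : Fin m, 2 := sum_le_sum fun i _ => hle i
    _ = 2 * m := by simp [mul_comm]

end Equitable

namespace DoubleWheel

variable {n : ℕ}

lemma card_vertices : Fintype.card (Option (Fin n ⊕ Fin n)) = 2 * n + 1 := by
  simp [two_mul]

lemma adj_none (v : Option (Fin n ⊕ Fin n)) (hv : v ≠ none) :
    (doubleWheelGraph n).Adj none v := by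
  obtain ⟨x, rfl⟩ := Option.ne_none_iff_exists'.mp hv
  simp [doubleWheelGraph]

def coloring (n : ℕ) : Option (Fin n ⊕ Fin n) → Fin (n + 1) :=
  fun v => v.elim (Fin.last n) fun x => (x.elim id id).castSucc

lemma coloring_proper (u v : Option (Fin n ⊕ Fin n)) (h : (doubleWheelGraph n).Adj u v) :
    coloring n u ≠ coloring n v := by
  rcases u with _ | i | i <;> rcases v with _ | j | j <;>
    simp_all [doubleWheelGraph, coloring, Fin.castSucc_ne_last, (Fin.castSucc_ne_last _).symm]

lemma coloring_surjective : Function.Surjective (coloring n) := by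
  intro i
  induction i using Fin.lastCases with
  | last => exact ⟨none, rfl⟩
  | cast k => exact ⟨some (Sum.inl k), rfl⟩

lemma classSize_coloring_le_two (i : Fin (n + 1)) : classSize (coloring n) i ≤ 2 := by
  induction i using Fin.lastCases with
  | last =>
    refine (card_le_card (t := {none}) fun v hv => ?_).trans (by simp)
    replace hv := (mem_filter.mp hv).2
    rcases v with _ | x | x <;> simp_all [coloring, Fin.castSucc_ne_last]
  | cast k =>
    refine (card_le_card (t := {some (Sum.inl k), some (Sum.inr k)}) fun v hv => ?_).trans
      card_le_two
    replace hv := (mem_filter.mp hv).2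
    rcases v with _ | x | x <;> simp_all [coloring, (Fin.castSucc_ne_last _).symm]

end DoubleWheel

theorem doubleWheel_equitableChromatic_general (n : ℕ) :
    (∃ c : Option (Fin n ⊕ Fin n) → Fin (n + 1),
        (∀ u v, (doubleWheelGraph n).Adj u v → c u ≠ c v) ∧
        Function.Surjective c ∧
        (∀ i j : Fin (n + 1), classSize c i ≤ classSize c j + 1)) ∧
    (∀ m : ℕ, m < n + 1 →
      ¬ (∃ c : Option (Fin n ⊕ Fin n) → Fin (m),
        (∀ u v, (doubleWheelGraph n).Adj u v → c u ≠ c v) ∧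
        Function.Surjective c ∧
        (∀ i j : Fin (m), classSize c i ≤ classSize c j + 1))) := by
  refine ⟨⟨DoubleWheel.coloring n, DoubleWheel.coloring_proper,
    DoubleWheel.coloring_surjective, classSize_le_add_one_of_le_two _
      DoubleWheel.coloring_surjective DoubleWheel.classSize_coloring_le_two⟩, ?_⟩
  rintro m hm ⟨c, hproper, -, hequitable⟩
  have := card_le_two_mul_of_equitable hproper hequitable DoubleWheel.adj_none
  rw [DoubleWheel.card_vertices] at this
  omega

theorem doubleWheel_equitableChromatic (n : ℕ) (hn : 3 ≤ n) :
    (∃ c : Option (Fin n ⊕ Fin n) → Fin (n + 1),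
        (∀ u v, (doubleWheelGraph n).Adj u v → c u ≠ c v) ∧
        Function.Surjective c ∧
        (∀ i j : Fin (n + 1), classSize c i ≤ classSize c j + 1)) ∧
    (∀ m : ℕ, m < n + 1 →
      ¬ (∃ c : Option (Fin n ⊕ Fin n) → Fin (m),
        (∀ u v, (doubleWheelGraph n).Adj u v → c u ≠ c v) ∧
        Function.Surjective c ∧
        (∀ i j : Fin (m), classSize c i ≤ classSize c j + 1))) :=
  doubleWheel_equitableChromatic_general n
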